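/- For 0 < L < 1/e, if ξ∞ = −W₀(−L)/L, then the derivative of the map ξ ↦ Lξ² − ξ ln ξ at ξ = ξ∞ equals −W₀(−L) − 1, which is strictly negative; hence ξ∞ is a stable equilibrium of the ODE dξ/dT = Lξ² − ξ ln ξ. -/
import Mathlib


theorem stable_equilibrium (L : ℝ) (hL : 0 < L) (hL' : L < 1 / Real.exp 1)
    (w₀ : ℝ) (hw₀ : w₀ * Real.exp w₀ = -L) (hw₀' : -1 < w₀) (hw₀'' : w₀ < 0)
    (xiInf : ℝ) (hξ : xiInf = -w₀ / L) :
    HasDerivAt (fun ξ : ℝ => L * ξ ^ 2 - ξ * Real.log ξ) (-w₀ - 1) xiInf ∧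
      -w₀ - 1 < 0 := by
  have hw0 : w₀ ≠ 0 := ne_of_lt hw₀''
  have hLw : L = -w₀ * Real.exp w₀ := by linarith
  have hxi : xiInf = Real.exp (-w₀) := by
    rw [hξ, hLw, Real.exp_neg]
    field_simp
  have hxpos : 0 < xiInf := by rw [hxi]; exact Real.exp_pos _
  have hlog : Real.log xiInf = -w₀ := by rw [hxi, Real.log_exp]
  have h1 : HasDerivAt (fun ξ : ℝ => L * ξ ^ 2) (L * (2 * xiInf ^ 1)) xiInf :=
    (hasDerivAt_pow 2 xiInf).const_mul L
  have h2 : HasDerivAt (fun ξ : ℝ => ξ * Real.log ξ) (Real.log xiInf + 1) xiInf :=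
    Real.hasDerivAt_mul_log hxpos.ne'
  have hLx : L * xiInf = -w₀ := by
    rw [hξ]; field_simp
  have heq : L * (2 * xiInf ^ 1) - (Real.log xiInf + 1) = -w₀ - 1 := by
    rw [hlog]; nlinarith [hLx]
  exact ⟨heq ▸ (h1.sub h2), by linarith⟩
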